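/- arXiv:1304.0684 — 5 statements merged into one kernel-verified Lean document; each statement's English description precedes it below -/
import Mathlib

section
/- For complex q with |q| < 1, the three Jacobi null theta functions satisfy θ₃(q)⁴ = θ₄(q)⁴ + θ₂(q)⁴, where θ₃(q) = ∑_{n∈ℤ} q^{n²}, θ₄(q) = ∑_{n∈ℤ} (-1)ⁿ q^{n²}, and θ₂(q) = ∑_{n∈ℤ} q^{(n+1/2)²}. -/
/-!
Substituting `(m, n) ↦ (m + n, m - n)` splits a double series over `ℤ²` into the pairs of equal
and of opposite parity. Since
`(m + n + d)² + (m - n + d')² = 2 (m + (d + d')/2)² + 2 (n + (d - d')/2)²`,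
each part of a product of two theta series is again a product of theta series, now in `q²`:
`θ₃(q)² = θ₃(q²)² + θ₂(q²)²`, `θ₄(q)² = θ₃(q²)² - θ₂(q²)²` and `θ₂(q)² = 2 θ₃(q²) θ₂(q²)`.
Hence `θ₃(q)⁴ - θ₄(q)⁴ = 4 θ₃(q²)² θ₂(q²)² = θ₂(q)⁴`.
-/

open Function Filter

theorem HasSum.int_prod_add_sub {M : Type*} [AddCommMonoid M] [TopologicalSpace M]
    [ContinuousAdd M] {f : ℤ × ℤ → M} {a b : M}
    (he : HasSum (fun p : ℤ × ℤ => f (p.1 + p.2, p.1 - p.2)) a)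
    (ho : HasSum (fun p : ℤ × ℤ => f (p.1 + p.2 + 1, p.1 - p.2)) b) : HasSum f (a + b) := by
  have hφ : Injective fun p : ℤ × ℤ => (p.1 + p.2, p.1 - p.2) := by
    intro p p' h
    simp only [Prod.mk.injEq] at h
    ext <;> omega
  have hψ : Injective fun p : ℤ × ℤ => (p.1 + p.2 + 1, p.1 - p.2) := by
    intro p p' h
    simp only [Prod.mk.injEq] at h
    ext <;> omega
  refine (hφ.hasSum_range_iff.2 he).add_isCompl ?_ (hψ.hasSum_range_iff.2 ho)
  have hrange : Set.range (fun p : ℤ × ℤ => (p.1 + p.2, p.1 - p.2)) = {p | Even (p.1 + p.2)} := by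
    ext p
    constructor
    · rintro ⟨p, rfl⟩
      exact ⟨p.1, by ring⟩
    · rintro ⟨k, hk⟩
      exact ⟨(k, p.1 - k), by simp [Prod.ext_iff]; omega⟩
  have hrange' : Set.range (fun p : ℤ × ℤ => (p.1 + p.2 + 1, p.1 - p.2)) =
      {p | Even (p.1 + p.2)}ᶜ := by
    ext p
    simp only [Set.mem_compl_iff, Set.mem_ofPred_eq, Int.not_even_iff_odd]
    constructor
    · rintro ⟨p, rfl⟩
      exact ⟨p.1, by ring⟩
    · rintro ⟨k, hk⟩
      exact ⟨(k, p.1 - k - 1), by simp [Prod.ext_iff]; omega⟩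
  rw [hrange, hrange']
  exact isCompl_compl

theorem Complex.cpow_ofReal_add_of_nonneg (x : ℂ) {a b : ℝ} (ha : 0 ≤ a) (hb : 0 ≤ b) :
    x ^ ((a + b : ℝ) : ℂ) = x ^ (a : ℂ) * x ^ (b : ℂ) := by
  rcases eq_or_ne x 0 with rfl | hx
  · rcases ha.eq_or_lt with rfl | ha
    · simp
    have hab : a + b ≠ 0 := by positivity
    rw [Complex.zero_cpow (mod_cast hab), Complex.zero_cpow (mod_cast ha.ne'), zero_mul]
  · push_cast
    exact Complex.cpow_add _ _ hx

theorem abs_le_sq_add {x d : ℝ} (h : 2 * |d| + 1 ≤ |x|) : |x| ≤ (x + d) ^ 2 := by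
  have h1 : |x| - |d| ≤ |x + d| := by
    have := abs_sub_abs_le_abs_sub x (-d)
    rwa [abs_neg, sub_neg_eq_add] at this
  nlinarith [sq_abs (x + d), sq_nonneg (|x| - 1), abs_nonneg d]

namespace NullTheta

/-- `q ^ (c x²)` as a principal complex power. Then `θ₃(q) = theta q 1 0`,
`θ₂(q) = theta q 1 (1/2)`, `θ₄(q) = thetaAlt q 1`, and `c = 2` plays the role of `q²`,
since `(q²) ^ s ≠ q ^ (2s)` in general. -/
noncomputable def term (q : ℂ) (c x : ℝ) : ℂ := q ^ ((c * x ^ 2 : ℝ) : ℂ)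

noncomputable def theta (q : ℂ) (c d : ℝ) : ℂ := ∑' n : ℤ, term q c (n + d)

noncomputable def thetaAlt (q : ℂ) (c : ℝ) : ℂ := ∑' n : ℤ, (-1 : ℂ) ^ n * term q c n

variable {q : ℂ} {c : ℝ}

theorem term_mul_term (hc : 0 ≤ c) {x y u v : ℝ} (hx : x = u + v) (hy : y = u - v) :
    term q c x * term q c y = term q (2 * c) u * term q (2 * c) v := by
  simp only [term]
  rw [← Complex.cpow_ofReal_add_of_nonneg _ (by positivity) (by positivity),
    ← Complex.cpow_ofReal_add_of_nonneg _ (by positivity) (by positivity), hx, hy]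
  congr 2
  ring

theorem summable_norm_term (hq : ‖q‖ < 1) (hc : 0 < c) (d : ℝ) :
    Summable fun n : ℤ => ‖term q c (n + d)‖ := by
  set r := ‖q‖ ^ c
  have hr0 : 0 ≤ r := by positivity
  have hr1 : r < 1 := Real.rpow_lt_one (norm_nonneg q) hq hc
  have hgeom : Summable fun n : ℤ => r ^ n.natAbs :=
    .of_nat_of_neg (by simpa using summable_geometric_of_lt_one hr0 hr1)
      (by simpa using summable_geometric_of_lt_one hr0 hr1)
  have hfar : ∀ᶠ n : ℤ in cofinite, 2 * |d| + 1 ≤ |(n : ℝ)| :=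
    (tendsto_norm_cocompact_atTop.comp Int.tendsto_coe_cofinite).eventually_ge_atTop _
  refine .of_norm_bounded_eventually hgeom ?_
  filter_upwards [hfar] with n hn
  rw [norm_norm, term, Complex.norm_cpow_real, Real.rpow_mul (norm_nonneg q), ← Real.rpow_natCast r,
    Nat.cast_natAbs, Int.cast_abs]
  exact Real.rpow_le_rpow_of_exponent_ge' hr0 hr1.le (abs_nonneg _) (abs_le_sq_add hn)

theorem hasSum_term_mul_term (hq : ‖q‖ < 1) (hc : 0 < c) (d d' : ℝ) :
    HasSum (fun p : ℤ × ℤ => term q c (p.1 + d) * term q c (p.2 + d'))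
      (theta q c d * theta q c d') := by
  have hd := summable_norm_term hq hc d
  have hd' := summable_norm_term hq hc d'
  rw [theta, theta, tsum_mul_tsum_of_summable_norm hd hd']
  exact (summable_mul_of_summable_norm hd hd').hasSum

theorem theta_mul_theta (hq : ‖q‖ < 1) (hc : 0 < c) (d d' : ℝ) :
    theta q c d * theta q c d' =
      theta q (2 * c) ((d + d') / 2) * theta q (2 * c) ((d - d') / 2) +
        theta q (2 * c) ((d + d' + 1) / 2) * theta q (2 * c) ((d - d' + 1) / 2) := by
  have h2c : 0 < 2 * c := by positivity
  refine (hasSum_term_mul_term hq hc d d').unique (.int_prod_add_sub ?_ ?_)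
  · exact (hasSum_term_mul_term hq h2c _ _).congr_fun fun p =>
      term_mul_term hc.le (by push_cast; ring) (by push_cast; ring)
  · exact (hasSum_term_mul_term hq h2c _ _).congr_fun fun p =>
      term_mul_term hc.le (by push_cast; ring) (by push_cast; ring)

theorem theta_add_one (q : ℂ) (c d : ℝ) : theta q c (d + 1) = theta q c d := by
  rw [theta, theta, ← (Equiv.addRight (1 : ℤ)).tsum_eq (fun n : ℤ => term q c (n + d))]
  congr 1 with n
  rw [Equiv.coe_addRight, Int.cast_add, Int.cast_one, add_assoc, add_comm 1 d]

theorem thetaAlt_sq (hq : ‖q‖ < 1) (hc : 0 < c) :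
    thetaAlt q c ^ 2 = theta q (2 * c) 0 ^ 2 - theta q (2 * c) (1 / 2) ^ 2 := by
  have h2c : 0 < 2 * c := by positivity
  have hs : Summable fun n : ℤ => ‖(-1 : ℂ) ^ n * term q c n‖ := by
    simpa [norm_mul, norm_zpow] using summable_norm_term hq hc 0
  have hsign (a b : ℤ) (x y : ℂ) :
      (-1 : ℂ) ^ a * x * ((-1) ^ b * y) = (-1) ^ (a + b) * (x * y) := by
    rw [zpow_add₀ (by norm_num)]
    ring
  rw [thetaAlt, sq, tsum_mul_tsum_of_summable_norm hs hs, sq, sq, sub_eq_add_neg]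
  refine HasSum.tsum_eq (.int_prod_add_sub ?_ ?_)
  · refine (hasSum_term_mul_term hq h2c 0 0).congr_fun fun p => ?_
    rw [hsign, Even.neg_one_zpow ⟨p.1, by ring⟩, one_mul]
    exact term_mul_term hc.le (by push_cast; ring) (by push_cast; ring)
  · refine (hasSum_term_mul_term hq h2c (1 / 2) (1 / 2)).neg.congr_fun fun p => ?_
    rw [hsign, Odd.neg_one_zpow ⟨p.1, by ring⟩, neg_one_mul]
    exact congrArg _ (term_mul_term hc.le (by push_cast; ring) (by push_cast; ring))

theorem theta_zero_sq (hq : ‖q‖ < 1) (hc : 0 < c) :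
    theta q c 0 ^ 2 = theta q (2 * c) 0 ^ 2 + theta q (2 * c) (1 / 2) ^ 2 := by
  rw [sq, theta_mul_theta hq hc]
  norm_num [sq]

theorem theta_half_sq (hq : ‖q‖ < 1) (hc : 0 < c) :
    theta q c (1 / 2) ^ 2 = 2 * theta q (2 * c) 0 * theta q (2 * c) (1 / 2) := by
  rw [sq, theta_mul_theta hq hc]
  have h1 : theta q (2 * c) 1 = theta q (2 * c) 0 := by simpa using theta_add_one q (2 * c) 0
  norm_num [h1]
  ring

theorem pow_natAbs_sq_eq_term (q : ℂ) (n : ℤ) : q ^ (n.natAbs ^ 2) = term q 1 n := by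
  rw [term, ← Complex.cpow_natCast, one_mul]
  congr 1
  push_cast [Nat.cast_natAbs]
  rw [← Int.cast_pow, sq_abs, Int.cast_pow]

theorem cpow_add_half_sq_eq_term (q : ℂ) (n : ℤ) :
    q ^ ((((n : ℂ) + 1 / 2) ^ 2) : ℂ) = term q 1 (n + 1 / 2) := by
  rw [term, one_mul]
  push_cast
  rfl

theorem theta_zero_pow_four (hq : ‖q‖ < 1) (hc : 0 < c) :
    theta q c 0 ^ 4 = thetaAlt q c ^ 4 + theta q c (1 / 2) ^ 4 := by
  set P := theta q (2 * c) 0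
  set Q := theta q (2 * c) (1 / 2)
  calc theta q c 0 ^ 4 = (theta q c 0 ^ 2) ^ 2 := by ring
    _ = (P ^ 2 - Q ^ 2) ^ 2 + (2 * P * Q) ^ 2 := by rw [theta_zero_sq hq hc]; ring
    _ = thetaAlt q c ^ 4 + theta q c (1 / 2) ^ 4 := by
      rw [← thetaAlt_sq hq hc, ← theta_half_sq hq hc]; ring

end NullTheta

open NullTheta

/-- Jacobi's quartic identity `θ₃⁴ = θ₄⁴ + θ₂⁴` for the null theta functions. -/
theorem jacobi_quartic_identity (q : ℂ) (hq : ‖q‖ < 1) :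
    (∑' n : ℤ, q ^ (n.natAbs ^ 2)) ^ 4 =
      (∑' n : ℤ, (-1 : ℂ) ^ n * q ^ (n.natAbs ^ 2)) ^ 4 +
      (∑' n : ℤ, q ^ ((((n : ℂ) + 1 / 2) ^ 2) : ℂ)) ^ 4 := by
  have h₃ : ∑' n : ℤ, q ^ (n.natAbs ^ 2) = theta q 1 0 := by
    simp only [theta, add_zero, pow_natAbs_sq_eq_term]
  have h₄ : ∑' n : ℤ, (-1 : ℂ) ^ n * q ^ (n.natAbs ^ 2) = thetaAlt q 1 := by
    simp only [thetaAlt, pow_natAbs_sq_eq_term]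
  have h₂ : ∑' n : ℤ, q ^ ((((n : ℂ) + 1 / 2) ^ 2) : ℂ) = theta q 1 (1 / 2) := by
    simp only [theta, cpow_add_half_sq_eq_term]
  rw [h₃, h₄, h₂]
  exact theta_zero_pow_four hq one_pos
end

section
/- The Jacobi triple product identity: for |ab| < 1 with a, b nonzero, ∑_{n∈ℤ} a^{n(n+1)/2} b^{n(n-1)/2} = ∏_{k≥0} (1 + a(ab)ᵏ)(1 + b(ab)ᵏ)(1 - (ab)^{k+1}). -/
/-!
Put `q = a * b`. Expanding `∏_{k<N} (1 + a qᵏ)(1 + b qᵏ)` gives the finite identity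
`∑_{|n| ≤ N} [2N, N+n]_q a^{n(n+1)/2} b^{n(n-1)/2}`: multiplying by `(1 + a q^N)(1 + b q^N)` shifts
the series by `n ↦ n ± 1`, and the Gaussian binomials obey the matching three-term q-Pascal rule.
As `N → ∞`, `[2N, N+n]_q = (q;q)_{2N} / ((q;q)_{N+n} (q;q)_{N-n})` tends to `1 / (q;q)_∞` and stays
uniformly bounded, while the terms `a^{n(n+1)/2} b^{n(n-1)/2}` form an absolutely convergent theta
series. Dominated convergence then gives
`∏_{k≥0} (1 + a qᵏ)(1 + b qᵏ) = (q;q)_∞⁻¹ ∑_{n∈ℤ} a^{n(n+1)/2} b^{n(n-1)/2}`.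
-/

open Filter Topology Complex
open scoped Real

section Algebra

variable {K : Type*} [Field K]

def qPochhammer (q : K) (n : ℕ) : K := ∏ j ∈ Finset.range n, (1 - q ^ (j + 1))

/-- `1 / (q;q)_m`, extended by zero to `m < 0` (like `1 / Γ` at its poles), so that
`centralQBinom q N n = [2N, N+n]_q` vanishes for `|n| > N` and no recursion needs a case split. -/
def qPochhammerInv (q : K) (m : ℤ) : K := if 0 ≤ m then (qPochhammer q m.toNat)⁻¹ else 0

def centralQBinom (q : K) (N : ℕ) (n : ℤ) : K :=
  qPochhammer q (2 * N) * qPochhammerInv q (N + n) * qPochhammerInv q (N - n)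

def jacobiTerm (a b : K) (n : ℤ) : K := a ^ (n * (n + 1) / 2) * b ^ (n * (n - 1) / 2)

lemma qPochhammer_succ (q : K) (n : ℕ) :
    qPochhammer q (n + 1) = qPochhammer q n * (1 - q ^ (n + 1)) :=
  Finset.prod_range_succ _ _

lemma one_sub_pow_succ_ne_zero {q : K} (hq : ¬IsOfFinOrder q) (n : ℕ) : 1 - q ^ (n + 1) ≠ 0 :=
  fun h => hq (isOfFinOrder_iff_pow_eq_one.2 ⟨n + 1, n.succ_pos, (sub_eq_zero.1 h).symm⟩)

lemma qPochhammerInv_natCast (q : K) (n : ℕ) : qPochhammerInv q n = (qPochhammer q n)⁻¹ := by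
  simp [qPochhammerInv]

lemma qPochhammerInv_of_neg (q : K) {m : ℤ} (hm : m < 0) : qPochhammerInv q m = 0 :=
  if_neg hm.not_ge

lemma qPochhammerInv_eq_one_sub_zpow_mul {q : K} (hq : ¬IsOfFinOrder q) (m : ℤ) :
    qPochhammerInv q m = (1 - q ^ (m + 1)) * qPochhammerInv q (m + 1) := by
  rcases le_or_gt 0 m with hm | hm
  · lift m to ℕ using hm
    rw [show (m : ℤ) + 1 = (m + 1 : ℕ) by push_cast; ring, qPochhammerInv_natCast,
      qPochhammerInv_natCast, qPochhammer_succ, zpow_natCast, mul_inv, mul_left_comm,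
      mul_inv_cancel₀ (one_sub_pow_succ_ne_zero hq m), mul_one]
  · rcases eq_or_lt_of_le (Int.le_sub_one_of_lt hm) with rfl | hm'
    · simp [qPochhammerInv_of_neg]
    · rw [qPochhammerInv_of_neg q hm, qPochhammerInv_of_neg q (by omega), mul_zero]

lemma centralQBinom_succ {q : K} (hq : ¬IsOfFinOrder q) (hq₀ : q ≠ 0) (N : ℕ) (n : ℤ) :
    centralQBinom q (N + 1) n = (1 + q ^ (2 * N + 1)) * centralQBinom q N n
      + q ^ ((N : ℤ) + 1 - n) * centralQBinom q N (n - 1)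
      + q ^ ((N : ℤ) + 1 + n) * centralQBinom q N (n + 1) := by
  have hI := qPochhammerInv_eq_one_sub_zpow_mul hq
  simp only [centralQBinom, show 2 * (N + 1) = 2 * N + 1 + 1 by ring, qPochhammer_succ]
  rw [show (N : ℤ) + (n - 1) = N + n - 1 by ring, hI (N + n - 1), sub_add_cancel, hI (N + n),
    show (N : ℤ) - (n + 1) = N - n - 1 by ring, hI (N - n - 1), sub_add_cancel, hI (N - n),
    show (N : ℤ) - (n - 1) = N - n + 1 by ring, show (N : ℤ) + (n + 1) = N + n + 1 by ring,
    show ((N + 1 : ℕ) : ℤ) + n = N + n + 1 by push_cast; ring,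
    show ((N + 1 : ℕ) : ℤ) - n = N - n + 1 by push_cast; ring]
  simp only [zpow_add₀ hq₀, zpow_sub₀ hq₀, zpow_natCast, zpow_one]
  have : q ^ n ≠ 0 := zpow_ne_zero n hq₀
  field_simp
  ring

lemma jacobiTerm_add_one {a b : K} (ha : a ≠ 0) (hb : b ≠ 0) (n : ℤ) :
    jacobiTerm a b (n + 1) = a ^ (n + 1) * b ^ n * jacobiTerm a b n := by
  have h₁ : (n + 1) * (n + 1 + 1) / 2 = n * (n + 1) / 2 + (n + 1) := by
    rw [show (n + 1) * (n + 1 + 1) = n * (n + 1) + (n + 1) * 2 by ring,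
      Int.add_mul_ediv_right _ _ two_ne_zero]
  have h₂ : (n + 1) * (n + 1 - 1) / 2 = n * (n - 1) / 2 + n := by
    rw [show (n + 1) * (n + 1 - 1) = n * (n - 1) + n * 2 by ring,
      Int.add_mul_ediv_right _ _ two_ne_zero]
  rw [jacobiTerm, jacobiTerm, h₁, h₂, zpow_add₀ ha, zpow_add₀ hb]
  ring

lemma centralQBinom_zero (q : K) (n : ℤ) : centralQBinom q 0 n = if n = 0 then 1 else 0 := by
  rcases lt_trichotomy n 0 with hn | rfl | hn
  · simp [centralQBinom, qPochhammerInv_of_neg q hn, hn.ne]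
  · simp [centralQBinom, qPochhammerInv, qPochhammer]
  · simp [centralQBinom, qPochhammerInv_of_neg q (neg_neg_of_pos hn), hn.ne']

lemma centralQBinom_mul_jacobiTerm_succ {a b : K} (ha : a ≠ 0) (hb : b ≠ 0)
    (hq : ¬IsOfFinOrder (a * b)) (N : ℕ) (n : ℤ) :
    centralQBinom (a * b) (N + 1) n * jacobiTerm a b n
      = (1 + (a * b) ^ (2 * N + 1)) * (centralQBinom (a * b) N n * jacobiTerm a b n)
        + a * (a * b) ^ N * (centralQBinom (a * b) N (n - 1) * jacobiTerm a b (n - 1))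
        + b * (a * b) ^ N * (centralQBinom (a * b) N (n + 1) * jacobiTerm a b (n + 1)) := by
  have hq₀ : a * b ≠ 0 := mul_ne_zero ha hb
  have h := jacobiTerm_add_one ha hb (n - 1)
  rw [sub_add_cancel] at h
  rw [centralQBinom_succ hq hq₀, jacobiTerm_add_one ha hb, h]
  simp only [zpow_add₀ ha, zpow_sub₀ hb, zpow_add₀ hq₀, zpow_sub₀ hq₀,
    mul_zpow, zpow_natCast, zpow_one]
  have : a ^ n ≠ 0 := zpow_ne_zero n ha
  have : b ^ n ≠ 0 := zpow_ne_zero n hb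
  field_simp

theorem hasSum_centralQBinom_mul_jacobiTerm [TopologicalSpace K] [IsTopologicalRing K]
    {a b : K} (ha : a ≠ 0) (hb : b ≠ 0) (hq : ¬IsOfFinOrder (a * b)) (N : ℕ) :
    HasSum (fun n => centralQBinom (a * b) N n * jacobiTerm a b n)
      (∏ k ∈ Finset.range N, (1 + a * (a * b) ^ k) * (1 + b * (a * b) ^ k)) := by
  induction N with
  | zero =>
    convert hasSum_ite_eq (0 : ℤ) (1 : K) using 1
    · ext n
      split_ifs with hn <;> simp [centralQBinom_zero, hn, jacobiTerm]
    · simp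
  | succ N ih =>
    have shift (c : ℤ) := (Equiv.addRight c).hasSum_iff.2 ih
    rw [Finset.prod_range_succ, show ∀ P : K, P * ((1 + a * (a * b) ^ N) * (1 + b * (a * b) ^ N))
      = (1 + (a * b) ^ (2 * N + 1)) * P + a * (a * b) ^ N * P + b * (a * b) ^ N * P from
        fun P => by ring]
    refine (((ih.mul_left _).add ((shift (-1)).mul_left _)).add ((shift 1).mul_left _)).congr_fun
      fun n => ?_
    simpa only [Int.reduceNeg, Equiv.coe_addRight, Function.comp_apply, sub_eq_add_neg] using
      centralQBinom_mul_jacobiTerm_succ ha hb hq N n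

end Algebra

section Analysis

variable {K : Type*} [NormedField K] {q : K}

lemma not_isOfFinOrder_of_norm_lt_one (hq : ‖q‖ < 1) : ¬IsOfFinOrder q :=
  fun h => hq.ne h.norm_eq_one

lemma summable_norm_mul_pow (a : K) (hq : ‖q‖ < 1) : Summable fun k : ℕ => ‖a * q ^ k‖ := by
  simpa [norm_pow] using (summable_geometric_of_lt_one (norm_nonneg q) hq).mul_left ‖a‖

lemma multipliable_one_add_mul_pow_mul_one_add_mul_pow [CompleteSpace K] (a b : K)
    (hq : ‖q‖ < 1) :
    Multipliable fun k : ℕ => (1 + a * q ^ k) * (1 + b * q ^ k) :=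
  (multipliable_one_add_of_summable (f := fun k => a * q ^ k) (summable_norm_mul_pow a hq)).mul
    (multipliable_one_add_of_summable (f := fun k => b * q ^ k) (summable_norm_mul_pow b hq))

lemma summable_norm_neg_pow_succ (hq : ‖q‖ < 1) : Summable fun k : ℕ => ‖-q ^ (k + 1)‖ := by
  simpa [pow_succ'] using summable_norm_mul_pow q hq

lemma multipliable_one_sub_pow_succ [CompleteSpace K] (hq : ‖q‖ < 1) :
    Multipliable fun k : ℕ => 1 - q ^ (k + 1) := by
  simpa only [← sub_eq_add_neg] using
    multipliable_one_add_of_summable (f := fun k => -q ^ (k + 1)) (summable_norm_neg_pow_succ hq)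

lemma tprod_one_sub_pow_succ_ne_zero [CompleteSpace K] (hq : ‖q‖ < 1) :
    ∏' k : ℕ, (1 - q ^ (k + 1)) ≠ 0 := by
  simpa only [← sub_eq_add_neg] using
    tprod_one_add_ne_zero_of_summable (f := fun k => -q ^ (k + 1))
    (fun k => by simpa only [← sub_eq_add_neg] using
      one_sub_pow_succ_ne_zero (not_isOfFinOrder_of_norm_lt_one hq) k)
    (summable_norm_neg_pow_succ hq)

lemma tendsto_qPochhammer [CompleteSpace K] (hq : ‖q‖ < 1) :
    Tendsto (qPochhammer q) atTop (𝓝 (∏' k : ℕ, (1 - q ^ (k + 1)))) :=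
  (multipliable_one_sub_pow_succ hq).hasProd.tendsto_prod_nat

lemma tendsto_qPochhammerInv [CompleteSpace K] (hq : ‖q‖ < 1) :
    Tendsto (qPochhammerInv q) atTop (𝓝 (∏' k : ℕ, (1 - q ^ (k + 1)))⁻¹) := by
  have h := ((tendsto_qPochhammer hq).inv₀ (tprod_one_sub_pow_succ_ne_zero hq)).comp
    (tendsto_atTop_atTop.2 fun n => ⟨n, fun m hm => by omega⟩ : Tendsto Int.toNat atTop atTop)
  refine h.congr' ((eventually_ge_atTop 0).mono fun m hm => ?_)
  simp [qPochhammerInv, hm]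

lemma tendsto_centralQBinom [CompleteSpace K] (hq : ‖q‖ < 1) (n : ℤ) :
    Tendsto (fun N : ℕ => centralQBinom q N n) atTop (𝓝 (∏' k : ℕ, (1 - q ^ (k + 1)))⁻¹) := by
  have hP := tprod_one_sub_pow_succ_ne_zero hq
  have hInv (s : ℤ) : Tendsto (fun N : ℕ => qPochhammerInv q (N + s)) atTop
      (𝓝 (∏' k : ℕ, (1 - q ^ (k + 1)))⁻¹) :=
    (tendsto_qPochhammerInv hq).comp (tendsto_atTop_add_const_right _ s tendsto_natCast_atTop_atTop)
  have h := (((tendsto_qPochhammer hq).comp (tendsto_id.const_mul_atTop' two_pos)).mul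
    (hInv n)).mul (hInv (-n))
  rw [mul_inv_cancel₀ hP, one_mul] at h
  exact h.congr fun N => by simp [centralQBinom, sub_eq_add_neg]

lemma exists_norm_centralQBinom_le [CompleteSpace K] (hq : ‖q‖ < 1) :
    ∃ C, ∀ N n, ‖centralQBinom q N n‖ ≤ C := by
  obtain ⟨A, hA⟩ := (tendsto_qPochhammer hq).norm.bddAbove_range
  obtain ⟨B, hB⟩ :=
    ((tendsto_qPochhammer hq).inv₀ (tprod_one_sub_pow_succ_ne_zero hq)).norm.bddAbove_range
  have hInv (m : ℤ) : ‖qPochhammerInv q m‖ ≤ B := by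
    rcases lt_or_ge m 0 with hm | hm
    · rw [qPochhammerInv_of_neg q hm, norm_zero]
      exact (norm_nonneg _).trans (hB ⟨0, rfl⟩)
    · lift m to ℕ using hm
      rw [qPochhammerInv_natCast]
      exact hB ⟨m, rfl⟩
  have hA₀ : 0 ≤ A := (norm_nonneg _).trans (hA ⟨0, rfl⟩)
  have hB₀ : 0 ≤ B := (norm_nonneg _).trans (hInv 0)
  refine ⟨A * B * B, fun N n => ?_⟩
  rw [centralQBinom, norm_mul, norm_mul]
  exact mul_le_mul (mul_le_mul (hA ⟨_, rfl⟩) (hInv _) (norm_nonneg _) hA₀) (hInv _)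
    (norm_nonneg _) (mul_nonneg hA₀ hB₀)

end Analysis

/-- With `a = exp w` and `b = exp v` the term is `exp (n² (w + v) / 2 + n (w - v) / 2)`. -/
lemma jacobiTerm_eq_jacobiTheta₂_term {a b : ℂ} (ha : a ≠ 0) (hb : b ≠ 0) (n : ℤ) :
    jacobiTerm a b n =
      jacobiTheta₂_term n ((log a - log b) / (4 * π * I)) ((log a + log b) / (2 * π * I)) := by
  have h₁ : ((n * (n + 1) / 2 : ℤ) : ℂ) = n * (n + 1) / 2 := by
    rw [Int.cast_div (even_iff_two_dvd.1 (Int.even_mul_succ_self n)) two_ne_zero]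
    push_cast; ring
  have h₂ : ((n * (n - 1) / 2 : ℤ) : ℂ) = n * (n - 1) / 2 := by
    rw [Int.cast_div (even_iff_two_dvd.1 (Int.even_mul_pred_self n)) two_ne_zero]
    push_cast; ring
  rw [jacobiTerm, jacobiTheta₂_term]
  conv_lhs => rw [← exp_log ha, ← exp_log hb, ← exp_int_mul, ← exp_int_mul, ← exp_add, h₁, h₂]
  congr 1
  field_simp
  ring

lemma summable_norm_jacobiTerm {a b : ℂ} (ha : a ≠ 0) (hb : b ≠ 0) (hab : ‖a * b‖ < 1) :
    Summable fun n => ‖jacobiTerm a b n‖ := by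
  have hre : (log a).re + (log b).re < 0 := by
    rw [log_re, log_re, ← Real.log_mul (norm_ne_zero_iff.2 ha) (norm_ne_zero_iff.2 hb), ← norm_mul]
    exact Real.log_neg (norm_pos_iff.2 (mul_ne_zero ha hb)) hab
  have him : 0 < ((log a + log b) / (2 * π * I)).im := by
    have hπ : (0 : ℝ) < π := Real.pi_pos
    simpa [div_im] using div_neg_of_neg_of_pos (mul_neg_of_neg_of_pos hre (by positivity))
      (by positivity : (0 : ℝ) < 2 * 2 * (π * π))
  simp_rw [jacobiTerm_eq_jacobiTheta₂_term ha hb]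
  exact summable_norm_iff.2 ((summable_jacobiTheta₂_term_iff _ _).2 him)

/-- The Jacobi triple product identity for `f(a,b) = ∑_{n∈ℤ} a^{n(n+1)/2} b^{n(n-1)/2}`. -/
theorem jacobi_triple_product (a b : ℂ) (ha : a ≠ 0) (hb : b ≠ 0)
    (hab : ‖a * b‖ < 1) :
    (∑' n : ℤ, a ^ (n * (n + 1) / 2) * b ^ (n * (n - 1) / 2)) =
      ∏' k : ℕ, (1 + a * (a * b) ^ k) * (1 + b * (a * b) ^ k) * (1 - (a * b) ^ (k + 1)) := by
  obtain ⟨C, hC⟩ := exists_norm_centralQBinom_le hab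
  have hP := tprod_one_sub_pow_succ_ne_zero hab
  have hD := multipliable_one_add_mul_pow_mul_one_add_mul_pow a b hab
  have hlim :
      Tendsto (fun N => ∏ k ∈ Finset.range N, (1 + a * (a * b) ^ k) * (1 + b * (a * b) ^ k))
      atTop (𝓝 ((∏' k : ℕ, (1 - (a * b) ^ (k + 1)))⁻¹ * ∑' n, jacobiTerm a b n)) := by
    rw [← tsum_mul_left]
    refine (tendsto_tsum_of_dominated_convergence
      ((summable_norm_jacobiTerm ha hb hab).mul_left C)
      (fun n => (tendsto_centralQBinom hab n).mul_const (jacobiTerm a b n))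
      (Eventually.of_forall fun N n => ?_)).congr fun N =>
        (hasSum_centralQBinom_mul_jacobiTerm ha hb (not_isOfFinOrder_of_norm_lt_one hab) N).tsum_eq
    rw [norm_mul]
    exact mul_le_mul_of_nonneg_right (hC N n) (norm_nonneg _)
  rw [hD.tprod_mul (multipliable_one_sub_pow_succ hab),
    tendsto_nhds_unique hD.hasProd.tendsto_prod_nat hlim, mul_right_comm, inv_mul_cancel₀ hP,
    one_mul]
  rfl
end

section
/- For every integer δ and all n ≥ 1, p_{5δ-3}(5n - 2) ≡ 0 (mod 5), where p_k(n) is defined by ∑_{n≥0} p_k(n) qⁿ = 1/(q;q)_∞^k. -/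
/-!
Modulo 5, `(q;q)_∞^(3 - 5δ) = (q;q)_∞^3 F^5` with `F = (q;q)_∞^(-δ)`, and `F^5 ≡ F(q^5)`.
So it suffices that 5 divides the coefficient of `q^m` in `(q;q)_∞^3` whenever `m ≡ 3 (mod 5)`.

For this we use Jacobi's identity in finite form. With `T(t) = t(t+1)/2`, the finite triple
product `∏_{i<a} (1 - z q^(i+1)) ∏_{i<b} (z - q^i) = ∑_k (-1)^(k+b) q^T(k-b) [a+b, k]_q z^k`
vanishes at `z = 1` when `b ≥ 1`, and differentiating there gives
`(q;q)_a (q;q)_(b-1) = ∑_k (-1)^(k+b) k q^T(k-b) [a+b, k]_q`.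
Modulo `q^(m+1)` and for `a, b ≥ 2m`, every `(q;q)_j` occurring here may be replaced by
`(q;q)_∞`, and `[a+b, k]_q (q;q)_∞ ≡ 1` whenever `T(k-b) ≤ m`. Hence the coefficient of
`q^m` in `(q;q)_∞^3` is `∑ ± k` over the `k` with `T(k-b) = m`. For `m ≡ 3 (mod 5)`, `T(t) = m`
forces `t ≡ 2 (mod 5)`, since `(2t+1)^2 = 8T(t) + 1`; so for `b ≡ 3 (mod 5)` every such
`k = b + t` is divisible by 5.
-/

open PowerSeries Finset

/-- The Euler product `(q;q)_∞ = ∏_{m≥1} (1 - q^m)` as a formal power series over `ℤ`. -/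
noncomputable def eulerProd : PowerSeries ℤ :=
  PowerSeries.mk fun n =>
    PowerSeries.coeff n (∏ k ∈ Finset.range (n + 1), (1 - (X : PowerSeries ℤ) ^ (1 + k)))

/-- The generating function `1/(q;q)_∞^k` of the generalized partition function `p_k`,
for `k ∈ ℤ` (the inverse is taken via `invOfUnit`, since `(q;q)_∞` has constant term 1). -/
noncomputable def genPartGF (k : ℤ) : PowerSeries ℤ :=
  if 0 ≤ k then (PowerSeries.invOfUnit eulerProd 1) ^ k.toNat
  else eulerProd ^ (-k).toNat

def triangle (t : ℤ) : ℕ := (t * (t + 1) / 2).toNat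

theorem two_mul_triangle (t : ℤ) : 2 * (triangle t : ℤ) = t * (t + 1) := by
  have hnonneg : 0 ≤ t * (t + 1) := by
    rcases le_or_gt 0 t with h | h
    · positivity
    · exact mul_nonneg_of_nonpos_of_nonpos h.le (by omega)
  rw [triangle, Int.toNat_of_nonneg (by omega)]
  exact Int.mul_ediv_cancel' (Int.even_mul_succ_self t).two_dvd

theorem mem_Icc_of_triangle_le {t : ℤ} {m : ℕ} (h : triangle t ≤ m) :
    t ∈ Set.Icc (-(m : ℤ) - 1) m := by
  have := two_mul_triangle t
  constructor <;> nlinarith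

theorem pow_mul_pow_triangle {M : Type*} [Monoid M] (x : M) {a b : ℕ} {s t : ℤ}
    (hst : s = t + 1) (hab : (a : ℤ) + s = b) :
    x ^ a * x ^ triangle s = x ^ b * x ^ triangle t := by
  rw [← pow_add, ← pow_add]
  congr 1
  subst hst
  zify
  linarith [two_mul_triangle t, two_mul_triangle (t + 1)]

section

variable {R : Type*} [CommRing R]

noncomputable def qPoch (n : ℕ) : R⟦X⟧ := ∏ i ∈ range n, (1 - X ^ (1 + i))

theorem qPoch_succ (n : ℕ) : (qPoch (n + 1) : R⟦X⟧) = qPoch n * (1 - X ^ (1 + n)) :=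
  prod_range_succ _ _

theorem isUnit_qPoch (n : ℕ) : IsUnit (qPoch n : R⟦X⟧) := by
  simp [isUnit_iff_constantCoeff, qPoch]

noncomputable def qBinom : ℕ → ℕ → R⟦X⟧
  | _, 0 => 1
  | 0, _ + 1 => 0
  | n + 1, k + 1 => qBinom n k + X ^ (k + 1) * qBinom n (k + 1)

@[simp] theorem qBinom_zero_right (n : ℕ) : (qBinom n 0 : R⟦X⟧) = 1 := by
  cases n <;> rfl

theorem qBinom_succ_succ (n k : ℕ) :
    (qBinom (n + 1) (k + 1) : R⟦X⟧) = qBinom n k + X ^ (k + 1) * qBinom n (k + 1) := rfl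

theorem qBinom_eq_zero_of_lt {n k : ℕ} (h : n < k) : (qBinom n k : R⟦X⟧) = 0 := by
  induction n generalizing k with
  | zero => obtain ⟨k, rfl⟩ : ∃ j, k = j + 1 := ⟨k - 1, by omega⟩; rfl
  | succ n ih =>
    obtain ⟨k, rfl⟩ : ∃ j, k = j + 1 := ⟨k - 1, by omega⟩
    rw [qBinom_succ_succ, ih (by omega), ih (by omega), mul_zero, add_zero]

theorem qBinom_mul_qPoch_mul_qPoch {n k : ℕ} (h : k ≤ n) :
    (qBinom n k * qPoch k * qPoch (n - k) : R⟦X⟧) = qPoch n := by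
  induction n generalizing k with
  | zero => obtain rfl := Nat.le_zero.mp h; simp [qPoch]
  | succ n ih =>
    cases k with
    | zero => simp [qPoch]
    | succ k =>
      rw [qBinom_succ_succ, Nat.add_sub_add_right, qPoch_succ, qPoch_succ]
      rcases h.lt_or_eq with h | h
      · obtain ⟨j, hj⟩ : ∃ j, n - k = j + 1 := ⟨n - k - 1, by omega⟩
        have h₁ := ih (k := k) (by omega)
        have h₂ := ih (k := k + 1) (by omega)
        rw [hj, qPoch_succ j] at h₁
        rw [show n - (k + 1) = j by omega, qPoch_succ k] at h₂
        rw [hj, qPoch_succ j]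
        have hX : (X : R⟦X⟧) ^ (1 + n) = X ^ (k + 1) * X ^ (1 + j) := by
          rw [← pow_add]; congr 1; omega
        linear_combination (1 - X ^ (1 + k)) * h₁ + X ^ (k + 1) * (1 - X ^ (1 + j)) * h₂
          + qPoch n * hX
      · obtain rfl : k = n := by omega
        rw [qBinom_eq_zero_of_lt (Nat.lt_succ_self k), Nat.sub_self]
        have := ih (k := k) le_rfl
        rw [Nat.sub_self] at this
        linear_combination (1 - X ^ (1 + k)) * this

theorem qBinom_succ_succ' (n k : ℕ) :
    (qBinom (n + 1) (k + 1) : R⟦X⟧) = X ^ (n - k) * qBinom n k + qBinom n (k + 1) := by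
  rcases lt_or_ge n k with h | h
  · simp [qBinom_eq_zero_of_lt h, qBinom_eq_zero_of_lt (Nat.succ_lt_succ h),
      qBinom_eq_zero_of_lt (h.trans (Nat.lt_succ_self k))]
  refine ((isUnit_qPoch (k + 1)).mul (isUnit_qPoch (n - k))).mul_left_injective ?_
  have h₀ := qBinom_mul_qPoch_mul_qPoch (R := R) (show k + 1 ≤ n + 1 by omega)
  have h₁ := qBinom_mul_qPoch_mul_qPoch (R := R) h
  rw [Nat.add_sub_add_right] at h₀
  beta_reduce
  rw [qPoch_succ k, qPoch_succ n] at h₀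
  rw [qPoch_succ k]
  rcases h.lt_or_eq with h | rfl
  · have h₂ := qBinom_mul_qPoch_mul_qPoch (R := R) (Nat.succ_le_of_lt h)
    obtain ⟨j, hj⟩ : ∃ j, n - k = j + 1 := ⟨n - k - 1, by omega⟩
    rw [show n - (k + 1) = j by omega, qPoch_succ] at h₂
    rw [hj, qPoch_succ] at h₀ h₁ ⊢
    have hX : (X : R⟦X⟧) ^ (1 + n) = X ^ (j + 1) * X ^ (1 + k) := by
      rw [← pow_add]; congr 1; omega
    linear_combination h₀ - X ^ (j + 1) * (1 - X ^ (1 + k)) * h₁ - (1 - X ^ (1 + j)) * h₂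
      - qPoch n * hX
  · rw [Nat.sub_self] at h₀ h₁
    rw [qBinom_eq_zero_of_lt (Nat.lt_succ_self k), Nat.sub_self]
    linear_combination h₀ - (1 - X ^ (1 + k)) * h₁

local notation "Y" => Polynomial.X

noncomputable def tripleProd (a b : ℕ) : Polynomial R⟦X⟧ :=
  (∏ i ∈ range a, (1 - Polynomial.C (X ^ (1 + i)) * Y)) *
    ∏ i ∈ range b, (Y - Polynomial.C (X ^ i))

theorem tripleProd_succ_left (a b : ℕ) :
    (tripleProd (a + 1) b : Polynomial R⟦X⟧) =
      tripleProd a b * (1 - Polynomial.C (X ^ (1 + a)) * Y) := by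
  rw [tripleProd, tripleProd, prod_range_succ, mul_right_comm]

theorem tripleProd_succ_right (a b : ℕ) :
    (tripleProd a (b + 1) : Polynomial R⟦X⟧) = tripleProd a b * (Y - Polynomial.C (X ^ b)) := by
  rw [tripleProd, tripleProd, prod_range_succ, mul_assoc]

theorem coeff_tripleProd_zero_left (b k : ℕ) :
    (tripleProd 0 b : Polynomial R⟦X⟧).coeff k =
      (-1) ^ (k + b) * X ^ triangle (k - b) * qBinom b k := by
  induction b generalizing k with
  | zero =>
    cases k
    · simp [tripleProd, triangle]
    · simp [tripleProd, Polynomial.coeff_one, qBinom_eq_zero_of_lt]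
  | succ b ih =>
    rw [tripleProd_succ_right]
    cases k with
    | zero =>
      have hX := pow_mul_pow_triangle (X : R⟦X⟧) (a := b) (b := 0) (s := 0 - b)
        (t := 0 - (b + 1)) (by ring) (by simp)
      simp only [Polynomial.mul_coeff_zero, ih, Polynomial.coeff_sub, Polynomial.coeff_X_zero,
        Polynomial.coeff_C_zero, qBinom_zero_right]
      push_cast
      linear_combination -(-1) ^ b * hX
    | succ j =>
      rw [Polynomial.coeff_mul_X_sub_C, ih, ih, qBinom_succ_succ]
      have hX := pow_mul_pow_triangle (X : R⟦X⟧) (a := b) (b := j + 1) (s := j + 1 - b)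
        (t := j - b) (by ring) (by push_cast; ring)
      push_cast
      rw [show (j : ℤ) + 1 - (b + 1) = j - b by ring]
      linear_combination (-1) ^ (j + b) * qBinom b (j + 1) * hX

theorem coeff_tripleProd (a b k : ℕ) :
    (tripleProd a b : Polynomial R⟦X⟧).coeff k =
      (-1) ^ (k + b) * X ^ triangle (k - b) * qBinom (a + b) k := by
  induction a generalizing k with
  | zero => rw [coeff_tripleProd_zero_left, zero_add]
  | succ a ih =>
    rw [tripleProd_succ_left]
    cases k with
    | zero => simp [ih]
    | succ j =>
      rw [mul_sub, mul_one, Polynomial.coeff_sub, ← mul_assoc, mul_comm _ (Polynomial.C _),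
        mul_assoc, Polynomial.coeff_C_mul, Polynomial.coeff_mul_X, ih, ih,
        show a + 1 + b = a + b + 1 by ring, qBinom_succ_succ']
      rcases lt_or_ge (a + b) j with hj | hj
      · simp [qBinom_eq_zero_of_lt hj]
      have hX := pow_mul_pow_triangle (X : R⟦X⟧) (a := a + b - j) (b := 1 + a) (s := j + 1 - b)
        (t := j - b) (by ring) (by omega)
      push_cast
      linear_combination (-1) ^ (j + b) * qBinom (a + b) j * hX

theorem derivative_tripleProd_eval_one (a b : ℕ) :
    (Polynomial.derivative (tripleProd a (b + 1) : Polynomial R⟦X⟧)).eval 1 =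
      qPoch a * qPoch b := by
  rw [tripleProd, prod_range_succ', ← mul_assoc, Polynomial.derivative_mul]
  simp [Polynomial.eval_prod, qPoch, add_comm]

theorem derivative_eval_one_eq_sum {S : Type*} [CommRing S] (p : Polynomial S) {N : ℕ}
    (hp : ∀ k, N < k → p.coeff k = 0) :
    (Polynomial.derivative p).eval 1 = ∑ k ∈ range (N + 1), (k : S) * p.coeff k := by
  rw [Polynomial.derivative_eval, Polynomial.sum_over_range' _ (by simp) (N + 1)
    (Nat.lt_succ_of_le (Polynomial.natDegree_le_iff_coeff_eq_zero.mpr hp))]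
  simp [mul_comm]

theorem qPoch_mul_qPoch_eq_sum (a b : ℕ) :
    (qPoch a * qPoch b : R⟦X⟧) = ∑ k ∈ range (a + b + 2), (k : R⟦X⟧) *
      ((-1) ^ (k + (b + 1)) * X ^ triangle (k - (b + 1 : ℕ)) * qBinom (a + (b + 1)) k) := by
  rw [← derivative_tripleProd_eval_one, derivative_eval_one_eq_sum _ (N := a + b + 1)]
  · simp_rw [coeff_tripleProd]
  · intro k hk
    rw [coeff_tripleProd, qBinom_eq_zero_of_lt (by omega), mul_zero]

noncomputable abbrev modXPow (m : ℕ) :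
    R⟦X⟧ →+* R⟦X⟧ ⧸ Ideal.span {(X : R⟦X⟧) ^ (m + 1)} :=
  Ideal.Quotient.mk _

theorem modXPow_X_pow {m e : ℕ} (h : m < e) : modXPow m ((X : R⟦X⟧) ^ e) = 0 :=
  Ideal.Quotient.eq_zero_iff_mem.mpr
    (Ideal.mem_span_singleton.mpr (pow_dvd_pow _ h))

theorem coeff_eq_of_modXPow_eq {m j : ℕ} {f g : R⟦X⟧} (h : modXPow m f = modXPow m g)
    (hj : j ≤ m) : coeff j f = coeff j g := by
  rw [Ideal.Quotient.eq, Ideal.mem_span_singleton, X_pow_dvd_iff] at h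
  simpa [sub_eq_zero] using h j (by omega)

theorem modXPow_qPoch {m n : ℕ} (h : m ≤ n) :
    modXPow m (qPoch n : R⟦X⟧) = modXPow m (qPoch m) := by
  induction n, h using Nat.le_induction with
  | base => rfl
  | succ n _ ih => simp [qPoch_succ, ih, modXPow_X_pow (show m < 1 + n by omega)]

theorem modXPow_qBinom_mul_qPoch {m n k : ℕ} (hk : m ≤ k) (hn : m + k ≤ n) :
    modXPow m (qBinom n k * qPoch n : R⟦X⟧) = 1 := by
  have hu : IsUnit (modXPow m (qPoch m : R⟦X⟧)) := (isUnit_qPoch m).map _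
  have h := congrArg (modXPow m) (qBinom_mul_qPoch_mul_qPoch (R := R) (show k ≤ n by omega))
  simp only [map_mul, modXPow_qPoch hk, modXPow_qPoch (show m ≤ n - k by omega),
    modXPow_qPoch (show m ≤ n by omega)] at h
  rw [map_mul, modXPow_qPoch (show m ≤ n by omega)]
  exact hu.mul_left_cancel (by linear_combination h)

end

theorem modXPow_eulerProd (m : ℕ) : modXPow m eulerProd = modXPow m (qPoch m) := by
  rw [Ideal.Quotient.eq, Ideal.mem_span_singleton, X_pow_dvd_iff]
  intro j hj
  rw [map_sub, sub_eq_zero, eulerProd, coeff_mk]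
  exact coeff_eq_of_modXPow_eq ((modXPow_qPoch (Nat.le_succ j)).trans
    (modXPow_qPoch (show j ≤ m by omega)).symm) le_rfl

theorem coeff_eulerProd_pow_three {m a b : ℕ} (ha : 2 * m ≤ a) (hb : 2 * m ≤ b) :
    coeff m (eulerProd ^ 3) = ∑ k ∈ range (a + b + 2),
      if triangle (k - (b + 1 : ℕ)) = m then (k : ℤ) * (-1) ^ (k + (b + 1)) else 0 := by
  have hterm : ∀ k ∈ range (a + b + 2), modXPow m ((k : ℤ⟦X⟧) * ((-1) ^ (k + (b + 1)) *
      X ^ triangle (k - (b + 1 : ℕ)) * qBinom (a + (b + 1)) k) * qPoch (a + (b + 1))) =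
      modXPow m ((k : ℤ⟦X⟧) * (-1) ^ (k + (b + 1)) * X ^ triangle (k - (b + 1 : ℕ))) := by
    intro k hk
    rcases lt_or_ge m (triangle (k - (b + 1 : ℕ))) with hT | hT
    · simp only [map_mul, modXPow_X_pow hT, mul_zero, zero_mul]
    obtain ⟨ht₁, ht₂⟩ := mem_Icc_of_triangle_le hT
    have hg := modXPow_qBinom_mul_qPoch (R := ℤ) (m := m) (n := a + (b + 1)) (k := k)
      (by omega) (by simp at hk; omega)
    simp only [map_mul] at hg ⊢
    linear_combination (modXPow m (k : ℤ⟦X⟧) * modXPow m ((-1) ^ (k + (b + 1))) *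
      modXPow m (X ^ triangle (k - (b + 1 : ℕ)))) * hg
  have hmod : modXPow m (eulerProd ^ 3) = modXPow m (∑ k ∈ range (a + b + 2),
      (k : ℤ⟦X⟧) * (-1) ^ (k + (b + 1)) * X ^ triangle (k - (b + 1 : ℕ))) := by
    rw [map_sum, ← sum_congr rfl hterm, ← map_sum, ← sum_mul, ← qPoch_mul_qPoch_eq_sum]
    simp only [map_pow, map_mul, modXPow_eulerProd, modXPow_qPoch (show m ≤ a by omega),
      modXPow_qPoch (show m ≤ b by omega), modXPow_qPoch (show m ≤ a + (b + 1) by omega)]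
    ring
  rw [coeff_eq_of_modXPow_eq hmod le_rfl, map_sum]
  refine sum_congr rfl fun k _ => ?_
  rw [show (k : ℤ⟦X⟧) * (-1) ^ (k + (b + 1)) = C ((k : ℤ) * (-1) ^ (k + (b + 1))) by simp,
    coeff_C_mul_X_pow]
  exact if_congr eq_comm rfl rfl

theorem five_dvd_add_three_of_triangle_eq {m : ℕ} (hm : m % 5 = 3) {t : ℤ}
    (h : triangle t = m) :
    (5 : ℤ) ∣ t + 3 := by
  have key : ∀ x : ZMod 5, x * (x + 1) = 2 * 3 → x + 3 = 0 := by decide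
  have hm' : ((m : ℤ) : ZMod 5) = 3 := by
    rw [Int.cast_natCast, ← ZMod.natCast_mod, hm]; rfl
  have h2 := congrArg (Int.cast : ℤ → ZMod 5) (two_mul_triangle t)
  rw [h] at h2
  push_cast at h2 hm'
  refine (ZMod.intCast_zmod_eq_zero_iff_dvd _ 5).mp ?_
  push_cast
  exact key _ (by rw [← h2, hm'])

theorem five_dvd_coeff_eulerProd_pow_three {m : ℕ} (hm : m % 5 = 3) :
    (5 : ℤ) ∣ coeff m (eulerProd ^ 3) := by
  rw [coeff_eulerProd_pow_three (a := 2 * m) (b := 5 * m + 2) le_rfl (by omega)]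
  refine dvd_sum fun k _ => ?_
  split_ifs with hT
  · have h5 := five_dvd_add_three_of_triangle_eq hm hT
    push_cast at h5
    exact Dvd.dvd.mul_right (by omega) _
  · exact dvd_zero _

theorem coeff_pow_expChar_eq_zero {S : Type*} [CommRing S] (p : ℕ) [ExpChar S p] (f : S⟦X⟧)
    {j : ℕ} (hj : ¬ p ∣ j) : coeff j (f ^ p) = 0 := by
  have hp := expChar_ne_zero S p
  rw [← MvPowerSeries.map_frobenius_expand p hp (f := f)]
  change frobenius S p (coeff j (expand p hp f)) = 0
  rw [coeff_expand_of_not_dvd p hp f hj, map_zero]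

theorem prime_dvd_coeff_pow (p : ℕ) [Fact p.Prime] (f : ℤ⟦X⟧) {j : ℕ} (hj : ¬ p ∣ j) :
    (p : ℤ) ∣ coeff j (f ^ p) := by
  rw [← ZMod.intCast_zmod_eq_zero_iff_dvd, ← eq_intCast (Int.castRingHom (ZMod p)),
    ← coeff_map, map_pow]
  exact coeff_pow_expChar_eq_zero p _ hj

theorem constantCoeff_eulerProd : constantCoeff eulerProd = 1 := by
  rw [← coeff_zero_eq_constantCoeff_apply, eulerProd, coeff_mk]
  simp

noncomputable def eulerProdUnit : ℤ⟦X⟧ˣ where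
  val := eulerProd
  inv := invOfUnit eulerProd 1
  val_inv := mul_invOfUnit _ _ (by simp [constantCoeff_eulerProd])
  inv_val := invOfUnit_mul _ _ (by simp [constantCoeff_eulerProd])

theorem genPartGF_eq_zpow (k : ℤ) : genPartGF k = ↑(eulerProdUnit ^ (-k)) := by
  rw [genPartGF]
  split_ifs with hk
  · rw [zpow_neg, ← Int.toNat_of_nonneg hk, zpow_natCast, ← inv_pow, Units.val_pow_eq_pow_val]
    rfl
  · rw [← Int.toNat_of_nonneg (show 0 ≤ -k by omega), zpow_natCast, Units.val_pow_eq_pow_val]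
    rfl

/-- For every `δ ∈ ℤ` and `n ≥ 1`, `p_{5δ-3}(5n-2) ≡ 0 (mod 5)`. -/
theorem genPart_congruence_mod_five (δ : ℤ) (n : ℕ) (hn : 1 ≤ n) :
    (5 : ℤ) ∣ PowerSeries.coeff (5 * n - 2) (genPartGF (5 * δ - 3)) := by
  have hgf :
      genPartGF (5 * δ - 3) = eulerProd ^ 3 * (↑(eulerProdUnit ^ (-δ)) : ℤ⟦X⟧) ^ 5 := by
    rw [genPartGF_eq_zpow, show -(5 * δ - 3) = (3 : ℕ) + -δ * (5 : ℕ) by push_cast; ring,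
      zpow_add, zpow_mul, zpow_natCast, zpow_natCast, Units.val_mul, Units.val_pow_eq_pow_val,
      Units.val_pow_eq_pow_val]
    rfl
  rw [hgf, coeff_mul]
  refine dvd_sum fun ⟨i, j⟩ hij => ?_
  rw [HasAntidiagonal.mem_antidiagonal] at hij
  by_cases hj : 5 ∣ j
  · exact (five_dvd_coeff_eulerProd_pow_three (by omega)).mul_right _
  · have := Fact.mk Nat.prime_five
    exact (prime_dvd_coeff_pow 5 _ hj).mul_left _
end

section
/- For every nonnegative integer n, ∑_{d ∣ 5n+4} Re(χ(d)) = 0 and ∑_{d ∣ 5n+1} Im(χ(d)) = 0, where χ is the Dirichlet character mod 5 with χ(1)=1, χ(2)=-i, χ(3)=i, χ(4)=-1. -/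
/-!
Pair each divisor `d` of `N` with `N / d`. Since `χ` is multiplicative, `χ d * χ (N / d) = χ N`, and
`χ d` lies on the unit circle when `χ N ≠ 0`, so `χ (N / d) = χ N * conj (χ d)`. For `N ≡ 4` this is
`-conj (χ d)`, whose real part is `-Re (χ d)`; for `N ≡ 1` it is `conj (χ d)`, whose imaginary part
is `-Im (χ d)`. Either way the summands of `d` and `N / d` cancel.
-/

open Complex

/-- The Dirichlet character `χ_{4,5}` mod 5, with values `⟨0, 1, -i, i, -1⟩`. -/
noncomputable def chi45 (d : ℕ) : ℂ :=
  if d % 5 = 1 then 1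
  else if d % 5 = 2 then -Complex.I
  else if d % 5 = 3 then Complex.I
  else if d % 5 = 4 then -1
  else 0

open ComplexConjugate

theorem Nat.sum_divisors_eq_zero_of_add_div {M : Type*} [AddCommGroup M] [IsAddTorsionFree M]
    {N : ℕ} (f : ℕ → M) (h : ∀ d, d ∣ N → f d + f (N / d) = 0) :
    ∑ d ∈ N.divisors, f d = 0 := by
  rw [← two_nsmul_eq_zero, two_nsmul]
  calc ∑ d ∈ N.divisors, f d + ∑ d ∈ N.divisors, f d
      = ∑ d ∈ N.divisors, (f d + f (N / d)) := by
        rw [Finset.sum_add_distrib, Nat.sum_div_divisors]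
    _ = 0 := Finset.sum_eq_zero fun d hd => h d (Nat.dvd_of_mem_divisors hd)

theorem chi45_mod (n : ℕ) : chi45 (n % 5) = chi45 n := by
  simp only [chi45, Nat.mod_mod]

theorem chi45_mul (a b : ℕ) : chi45 (a * b) = chi45 a * chi45 b := by
  rw [← chi45_mod, Nat.mul_mod, ← chi45_mod a, ← chi45_mod b]
  have ha := Nat.mod_lt a (by norm_num : 5 > 0)
  have hb := Nat.mod_lt b (by norm_num : 5 > 0)
  interval_cases a % 5 <;> interval_cases b % 5 <;> simp [chi45]

theorem chi45_mul_conj_self {d : ℕ} (hd : chi45 d ≠ 0) : chi45 d * conj (chi45 d) = 1 := by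
  rw [← chi45_mod] at hd ⊢
  have h := Nat.mod_lt d (by norm_num : 5 > 0)
  interval_cases d % 5 <;> simp [chi45] at hd ⊢

theorem chi45_div {N d : ℕ} (hd : d ∣ N) (hN : chi45 N ≠ 0) :
    chi45 (N / d) = chi45 N * conj (chi45 d) := by
  have hmul : chi45 d * chi45 (N / d) = chi45 N := by
    rw [← chi45_mul, Nat.mul_div_cancel' hd]
  have hd0 : chi45 d ≠ 0 := left_ne_zero_of_mul (hmul ▸ hN)
  rw [← hmul, mul_comm (chi45 d), mul_assoc, chi45_mul_conj_self hd0, mul_one]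

/-- For every `n ≥ 0`, `∑_{d ∣ 5n+4} Re χ_{4,5}(d) = 0` and `∑_{d ∣ 5n+1} Im χ_{4,5}(d) = 0`. -/
theorem chi45_divisor_sum_vanishing (n : ℕ) :
    (∑ d ∈ (5 * n + 4).divisors, (chi45 d).re) = 0 ∧
    (∑ d ∈ (5 * n + 1).divisors, (chi45 d).im) = 0 := by
  have h4 : chi45 (5 * n + 4) = -1 := by simp [chi45, Nat.add_mod]
  have h1 : chi45 (5 * n + 1) = 1 := by simp [chi45, Nat.add_mod]
  constructor
  · refine Nat.sum_divisors_eq_zero_of_add_div _ fun d hd => ?_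
    rw [chi45_div hd (by simp [h4]), h4]
    simp
  · refine Nat.sum_divisors_eq_zero_of_add_div _ fun d hd => ?_
    rw [chi45_div hd (by simp [h1]), h1]
    simp
end

section
/- Ramanujan's differential equations: with E₂(q) = 1 - 24∑_{n≥1} σ₁(n)qⁿ, E₄(q) = 1 + 240∑_{n≥1} σ₃(n)qⁿ, E₆(q) = 1 - 504∑_{n≥1} σ₅(n)qⁿ as formal power series, one has q·dE₂/dq = (E₂² - E₄)/12, q·dE₄/dq = (E₂E₄ - E₆)/3, and q·dE₆/dq = (E₂E₆ - E₄²)/2. -/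
open PowerSeries Finset

/-- The Eisenstein series `E₂ = 1 - 24 ∑ σ₁(n)qⁿ` as a formal power series over `ℚ`. -/
noncomputable def E2 : PowerSeries ℚ :=
  PowerSeries.mk fun n => if n = 0 then 1 else -24 * ∑ d ∈ n.divisors, (d : ℚ)

/-- The Eisenstein series `E₄ = 1 + 240 ∑ σ₃(n)qⁿ` as a formal power series over `ℚ`. -/
noncomputable def E4 : PowerSeries ℚ :=
  PowerSeries.mk fun n => if n = 0 then 1 else 240 * ∑ d ∈ n.divisors, (d : ℚ) ^ 3

/-- The Eisenstein series `E₆ = 1 - 504 ∑ σ₅(n)qⁿ` as a formal power series over `ℚ`. -/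
noncomputable def E6 : PowerSeries ℚ :=
  PowerSeries.mk fun n => if n = 0 then 1 else -504 * ∑ d ∈ n.divisors, (d : ℚ) ^ 5

/-- The operator `q·d/dq` on formal power series. -/
noncomputable def qDeriv (f : PowerSeries ℚ) : PowerSeries ℚ :=
  PowerSeries.mk fun n => (n : ℚ) * PowerSeries.coeff n f

/-!
Liouville's elementary method. Let `R(n)` be the set of quadruples `((a, x), (b, y))` of positive
integers with `a x + b y = n`; the coefficient of `qⁿ` in `(∑ σ_r(m) qᵐ) (∑ σ_s(m) qᵐ)` is
`∑_{R(n)} a^r b^s`. Suppose `v` and `p` are symmetric and `v(a, b) - v(a + b, b) = p(a + b, b)`.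
The Euclid step `((a, x), (b, y)) ↦ ((a + b, x), (b, y - x))` is a bijection from the part of
`R(n)` with `x < y` onto the part with `b < a`, so `∑_{x < y} v(a, b) = ∑_{b < a} (v + p)(a, b)`;
together with the symmetry `((a, x), (b, y)) ↦ ((b, y), (a, x))`, comparing the splittings of
`∑_{R(n)} v(a, b)` by the order of `x, y` and by the order of `a, b` leaves
`∑_{a ≠ b} p = ∑_{a = b} v - ∑_{x = y} v`. Both diagonals are divisor sums
`∑_{d e = n}` whose inner sums are power sums, evaluated by Faulhaber's formulas.
For `p(a, b) = a^r b^s + a^s b^r` with `(r, s) = (1, 1), (1, 3), (1, 5), (3, 3)` this gives the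
four classical convolution identities for divisor sums, and Ramanujan's system is a linear
combination of them.
-/

open scoped ArithmeticFunction.sigma

section General

variable {M : Type*}

theorem sum_filter_lt_add_sum_filter_gt_add_sum_filter_eq {α β : Type*} [AddCommMonoid M]
    [LinearOrder β] (s : Finset α) (f : α → M) (g h : α → β) :
    ∑ t ∈ s.filter (fun t => g t < h t), f t + ∑ t ∈ s.filter (fun t => h t < g t), f t +
      ∑ t ∈ s.filter (fun t => g t = h t), f t = ∑ t ∈ s, f t := by
  simp only [sum_filter, ← sum_add_distrib]
  refine sum_congr rfl fun t _ => ?_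
  rcases lt_trichotomy (g t) (h t) with hlt | heq | hgt
  · simp [hlt, hlt.ne, hlt.not_gt]
  · simp [heq]
  · simp [hgt, hgt.ne', hgt.not_gt]

theorem sum_Ico_one_eq_sum_range_sub [AddCommGroup M] (f : ℕ → M) {d : ℕ} (hd : 0 < d) :
    ∑ a ∈ Ico 1 d, f a = ∑ a ∈ range d, f a - f 0 := by
  rw [sum_range_eq_add_Ico f hd, add_sub_cancel_left]

end General

namespace Ramanujan

theorem sum_range_natCast (d : ℕ) : ∑ a ∈ range d, (a : ℚ) = ((d : ℚ) ^ 2 - d) / 2 := by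
  induction d with
  | zero => simp
  | succ d ih => rw [sum_range_succ, ih]; push_cast; ring

theorem sum_range_natCast_pow_two (d : ℕ) :
    ∑ a ∈ range d, (a : ℚ) ^ 2 = (2 * (d : ℚ) ^ 3 - 3 * (d : ℚ) ^ 2 + d) / 6 := by
  induction d with
  | zero => simp
  | succ d ih => rw [sum_range_succ, ih]; push_cast; ring

theorem sum_range_natCast_pow_three (d : ℕ) :
    ∑ a ∈ range d, (a : ℚ) ^ 3 = ((d : ℚ) ^ 4 - 2 * (d : ℚ) ^ 3 + (d : ℚ) ^ 2) / 4 := by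
  induction d with
  | zero => simp
  | succ d ih => rw [sum_range_succ, ih]; push_cast; ring

theorem sum_range_natCast_pow_four (d : ℕ) :
    ∑ a ∈ range d, (a : ℚ) ^ 4 =
      (6 * (d : ℚ) ^ 5 - 15 * (d : ℚ) ^ 4 + 10 * (d : ℚ) ^ 3 - d) / 30 := by
  induction d with
  | zero => simp
  | succ d ih => rw [sum_range_succ, ih]; push_cast; ring

theorem sum_range_natCast_pow_five (d : ℕ) :
    ∑ a ∈ range d, (a : ℚ) ^ 5 =
      (2 * (d : ℚ) ^ 6 - 6 * (d : ℚ) ^ 5 + 5 * (d : ℚ) ^ 4 - (d : ℚ) ^ 2) / 12 := by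
  induction d with
  | zero => simp
  | succ d ih => rw [sum_range_succ, ih]; push_cast; ring

theorem sum_range_natCast_pow_six (d : ℕ) :
    ∑ a ∈ range d, (a : ℚ) ^ 6 =
      (6 * (d : ℚ) ^ 7 - 21 * (d : ℚ) ^ 6 + 21 * (d : ℚ) ^ 5 - 7 * (d : ℚ) ^ 3 + d) / 42 := by
  induction d with
  | zero => simp
  | succ d ih => rw [sum_range_succ, ih]; push_cast; ring

section Representations

variable {M : Type*} [AddCommMonoid M]

def reps (n : ℕ) : Finset ((ℕ × ℕ) × (ℕ × ℕ)) :=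
  (antidiagonal n).biUnion fun ij => ij.1.divisorsAntidiagonal ×ˢ ij.2.divisorsAntidiagonal

@[simp]
theorem mem_reps {n a x b y : ℕ} :
    ((a, x), (b, y)) ∈ reps n ↔ a * x + b * y = n ∧ a ≠ 0 ∧ x ≠ 0 ∧ b ≠ 0 ∧ y ≠ 0 := by
  simp only [reps, mem_biUnion, HasAntidiagonal.mem_antidiagonal, mem_product,
    Nat.mem_divisorsAntidiagonal, Prod.exists]
  constructor
  · rintro ⟨i, j, rfl, ⟨rfl, hi⟩, rfl, hj⟩
    simp_all
  · rintro ⟨rfl, ha, hx, hb, hy⟩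
    exact ⟨a * x, b * y, rfl, ⟨rfl, mul_ne_zero ha hx⟩, rfl, mul_ne_zero hb hy⟩

theorem sum_reps (n : ℕ) (F : (ℕ × ℕ) × (ℕ × ℕ) → M) :
    ∑ t ∈ reps n, F t = ∑ ij ∈ antidiagonal n,
      ∑ u ∈ ij.1.divisorsAntidiagonal, ∑ w ∈ ij.2.divisorsAntidiagonal, F (u, w) := by
  rw [reps, sum_biUnion]
  · simp only [sum_product]
  · rintro ⟨i, j⟩ - ⟨i', j'⟩ - hne
    refine disjoint_left.mpr fun ⟨u, w⟩ h h' => hne ?_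
    simp only [mem_product, Nat.mem_divisorsAntidiagonal] at h h'
    rw [← h.1.1, ← h.2.1, h'.1.1, h'.2.1]

theorem sum_reps_swap (n : ℕ) (F : (ℕ × ℕ) × (ℕ × ℕ) → M) :
    ∑ t ∈ reps n, F t.swap = ∑ t ∈ reps n, F t :=
  sum_nbij' Prod.swap Prod.swap (by simp [add_comm]; tauto) (by simp [add_comm]; tauto)
    (by simp) (by simp) (by simp)

theorem sum_reps_map_swap (n : ℕ) (F : (ℕ × ℕ) × (ℕ × ℕ) → M) :
    ∑ t ∈ reps n, F (t.map Prod.swap Prod.swap) = ∑ t ∈ reps n, F t :=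
  sum_nbij' (Prod.map Prod.swap Prod.swap) (Prod.map Prod.swap Prod.swap)
    (by simp [mul_comm]; tauto) (by simp [mul_comm]; tauto) (by simp) (by simp) (by simp)

theorem sum_reps_filter_comm {f : ℕ → ℕ → M} (hf : ∀ a b, f a b = f b a) (n : ℕ)
    (P : ℕ × ℕ → ℕ × ℕ → Prop) [∀ u w, Decidable (P u w)] :
    ∑ t ∈ (reps n).filter (fun t => P t.1 t.2), f t.1.1 t.2.1 =
      ∑ t ∈ (reps n).filter (fun t => P t.2 t.1), f t.1.1 t.2.1 := by
  rw [sum_filter, sum_filter, ← sum_reps_swap n]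
  exact sum_congr rfl fun t _ => by rw [Prod.fst_swap, Prod.snd_swap, hf]

theorem sum_reps_filter_lt (n : ℕ) (f : ℕ → ℕ → M) :
    ∑ t ∈ (reps n).filter (fun t => t.1.2 < t.2.2), f t.1.1 t.2.1 =
      ∑ t ∈ (reps n).filter (fun t => t.2.1 < t.1.1), f (t.1.1 - t.2.1) t.2.1 := by
  refine sum_nbij' (fun t => ((t.1.1 + t.2.1, t.1.2), (t.2.1, t.2.2 - t.1.2)))
    (fun t => ((t.1.1 - t.2.1, t.1.2), (t.2.1, t.2.2 + t.1.2))) ?_ ?_ ?_ ?_ ?_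
  · rintro ⟨⟨a, x⟩, b, y⟩ ht
    simp only [mem_filter, mem_reps] at ht ⊢
    obtain ⟨⟨rfl, ha, hx, hb, hy⟩, hxy⟩ := ht
    obtain ⟨k, rfl⟩ := Nat.exists_eq_add_of_lt hxy
    refine ⟨⟨?_, by omega, hx, hb, by omega⟩, by omega⟩
    rw [show x + k + 1 - x = k + 1 by omega]
    ring
  · rintro ⟨⟨a, x⟩, b, y⟩ ht
    simp only [mem_filter, mem_reps] at ht ⊢
    obtain ⟨⟨rfl, ha, hx, hb, hy⟩, hba⟩ := ht
    obtain ⟨k, rfl⟩ := Nat.exists_eq_add_of_lt hba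
    refine ⟨⟨?_, by omega, hx, hb, by omega⟩, by omega⟩
    rw [show b + k + 1 - b = k + 1 by omega]
    ring
  · rintro ⟨⟨a, x⟩, b, y⟩ ht
    simp only [mem_filter] at ht
    simp only [Prod.mk.injEq, and_true, true_and]
    omega
  · rintro ⟨⟨a, x⟩, b, y⟩ ht
    simp only [mem_filter] at ht
    simp only [Prod.mk.injEq, and_true, true_and]
    omega
  · rintro ⟨⟨a, x⟩, b, y⟩ -
    simp

theorem sum_reps_filter_fst_eq (n : ℕ) (F : (ℕ × ℕ) × (ℕ × ℕ) → M) :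
    ∑ t ∈ (reps n).filter (fun t => t.1.1 = t.2.1), F t =
      ∑ de ∈ n.divisorsAntidiagonal, ∑ x ∈ Ico 1 de.2, F ((de.1, x), (de.1, de.2 - x)) := by
  rw [sum_sigma']
  refine sum_nbij' (fun t => ⟨(t.1.1, t.1.2 + t.2.2), t.1.2⟩)
    (fun z => ((z.1.1, z.2), (z.1.1, z.1.2 - z.2))) ?_ ?_ ?_ ?_ ?_
  · rintro ⟨⟨a, x⟩, b, y⟩ ht
    simp only [mem_filter, mem_reps] at ht
    obtain ⟨⟨rfl, ha, hx, hb, hy⟩, rfl⟩ := ht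
    simp only [mem_sigma, Nat.mem_divisorsAntidiagonal, mem_Ico]
    refine ⟨⟨by ring, by positivity⟩, by omega, by omega⟩
  · rintro ⟨⟨d, e⟩, x⟩ hz
    simp only [mem_sigma, Nat.mem_divisorsAntidiagonal, mem_Ico] at hz
    obtain ⟨⟨rfl, hde⟩, hx, hxe⟩ := hz
    simp only [mem_filter, mem_reps]
    refine ⟨⟨?_, left_ne_zero_of_mul hde, by omega, left_ne_zero_of_mul hde, by omega⟩, trivial⟩
    rw [← mul_add, Nat.add_sub_cancel' hxe.le]
  · rintro ⟨⟨a, x⟩, b, y⟩ ht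
    simp only [mem_filter] at ht
    simp [ht.2]
  · rintro ⟨⟨d, e⟩, x⟩ hz
    simp only [mem_sigma, mem_Ico] at hz
    simp [Nat.add_sub_cancel' hz.2.2.le]
  · rintro ⟨⟨a, x⟩, b, y⟩ ht
    simp only [mem_filter] at ht
    simp [ht.2]

theorem sum_reps_filter_snd_eq (n : ℕ) (F : (ℕ × ℕ) × (ℕ × ℕ) → M) :
    ∑ t ∈ (reps n).filter (fun t => t.1.2 = t.2.2), F t =
      ∑ de ∈ n.divisorsAntidiagonal, ∑ a ∈ Ico 1 de.1, F ((a, de.2), (de.1 - a, de.2)) := calc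
  _ = ∑ t ∈ (reps n).filter (fun t => t.1.1 = t.2.1), F (t.map Prod.swap Prod.swap) := by
    rw [sum_filter, sum_filter, ← sum_reps_map_swap n]
    rfl
  _ = ∑ de ∈ n.divisorsAntidiagonal, ∑ x ∈ Ico 1 de.2, F ((x, de.1), (de.2 - x, de.1)) :=
    sum_reps_filter_fst_eq n _
  _ = _ := by
    conv_lhs => rw [← Nat.map_swap_divisorsAntidiagonal, sum_map]
    rfl

end Representations

theorem sum_reps_eq_sum_divisorsAntidiagonal (n : ℕ) {v p : ℚ → ℚ → ℚ}
    (hv : ∀ a b, v a b = v b a) (hp : ∀ a b, p a b = p b a)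
    (hvp : ∀ a b, v a b - v (a + b) b = p (a + b) b) :
    ∑ t ∈ reps n, p t.1.1 t.2.1 = ∑ de ∈ n.divisorsAntidiagonal,
      (((de.2 : ℚ) - 1) * (p de.1 de.1 + v de.1 de.1) - ∑ a ∈ Ico 1 de.1, v a (de.1 - a)) := by
  have hV_xy := sum_filter_lt_add_sum_filter_gt_add_sum_filter_eq (reps n)
    (fun t => v t.1.1 t.2.1) (fun t => t.1.2) (fun t => t.2.2)
  have hV_ab := sum_filter_lt_add_sum_filter_gt_add_sum_filter_eq (reps n)
    (fun t => v t.1.1 t.2.1) (fun t => t.1.1) (fun t => t.2.1)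
  have hP_ab := sum_filter_lt_add_sum_filter_gt_add_sum_filter_eq (reps n)
    (fun t => p t.1.1 t.2.1) (fun t => t.1.1) (fun t => t.2.1)
  have hV_swap_xy := sum_reps_filter_comm (fun a b => hv a b) n (fun u w => w.2 < u.2)
  have hV_swap_ab := sum_reps_filter_comm (fun a b => hv a b) n (fun u w => u.1 < w.1)
  have hP_swap_ab := sum_reps_filter_comm (fun a b => hp a b) n (fun u w => u.1 < w.1)
  have hEuclid : ∑ t ∈ (reps n).filter (fun t => t.1.2 < t.2.2), v t.1.1 t.2.1 =
      ∑ t ∈ (reps n).filter (fun t => t.2.1 < t.1.1), (v t.1.1 t.2.1 + p t.1.1 t.2.1) := by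
    rw [sum_reps_filter_lt n (fun a b => v a b)]
    refine sum_congr rfl fun t ht => ?_
    have := hvp ((t.1.1 - t.2.1 : ℕ) : ℚ) t.2.1
    rw [← Nat.cast_add, Nat.sub_add_cancel (mem_filter.mp ht).2.le] at this
    linarith
  have hdiag_ab : ∑ t ∈ (reps n).filter (fun t => t.1.1 = t.2.1),
      (v t.1.1 t.2.1 + p t.1.1 t.2.1) =
      ∑ de ∈ n.divisorsAntidiagonal, ((de.2 : ℚ) - 1) * (p de.1 de.1 + v de.1 de.1) := by
    rw [sum_reps_filter_fst_eq]
    refine sum_congr rfl fun de hde => ?_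
    have he : 1 ≤ de.2 := Nat.pos_of_mem_divisors (Nat.snd_mem_divisors_of_mem_antidiagonal hde)
    simp only [sum_const, Nat.card_Ico, nsmul_eq_mul, Nat.cast_sub he]
    push_cast
    ring
  have hdiag_xy : ∑ t ∈ (reps n).filter (fun t => t.1.2 = t.2.2), v t.1.1 t.2.1 =
      ∑ de ∈ n.divisorsAntidiagonal, ∑ a ∈ Ico 1 de.1, v a (de.1 - a) := by
    rw [sum_reps_filter_snd_eq]
    refine sum_congr rfl fun de _ => sum_congr rfl fun a ha => ?_
    rw [Nat.cast_sub (mem_Ico.mp ha).2.le]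
  rw [sum_add_distrib] at hEuclid
  rw [sum_sub_distrib, ← hdiag_ab, ← hdiag_xy, sum_add_distrib]
  linarith

noncomputable def sigmaSeries (k : ℕ) : PowerSeries ℚ :=
  PowerSeries.mk fun n => (σ k n : ℚ)

theorem coeff_sigmaSeries (k n : ℕ) : coeff n (sigmaSeries k) = σ k n :=
  coeff_mk _ _

theorem coeff_qDeriv (f : PowerSeries ℚ) (n : ℕ) : coeff n (qDeriv f) = n * coeff n f :=
  coeff_mk _ _

theorem qDeriv_one_add_smul (c : ℚ) (f : PowerSeries ℚ) :
    qDeriv (1 + c • f) = c • qDeriv f := by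
  ext n
  rcases eq_or_ne n 0 with rfl | hn
  · simp [coeff_qDeriv]
  · simp [coeff_qDeriv, coeff_one, hn]
    ring

theorem sigma_eq_sum_divisorsAntidiagonal (k n : ℕ) :
    (σ k n : ℚ) = ∑ de ∈ n.divisorsAntidiagonal, (de.1 : ℚ) ^ k := by
  rw [ArithmeticFunction.sigma_apply, Nat.sum_divisorsAntidiagonal fun d _ => (d : ℚ) ^ k]
  push_cast
  rfl

theorem mul_sigma_eq_sum_divisorsAntidiagonal (k n : ℕ) :
    (n : ℚ) * σ k n = ∑ de ∈ n.divisorsAntidiagonal, (de.1 : ℚ) ^ (k + 1) * de.2 := by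
  rw [sigma_eq_sum_divisorsAntidiagonal, mul_sum]
  refine sum_congr rfl fun de hde => ?_
  rw [← (Nat.mem_divisorsAntidiagonal.mp hde).1]
  push_cast
  ring

theorem E2_eq_sigmaSeries : E2 = 1 + (-24 : ℚ) • sigmaSeries 1 := by
  ext n
  rcases eq_or_ne n 0 with rfl | hn
  · simp [E2, sigmaSeries]
  · simp [E2, sigmaSeries, coeff_one, hn, ArithmeticFunction.sigma_one_apply]

theorem E4_eq_sigmaSeries : E4 = 1 + (240 : ℚ) • sigmaSeries 3 := by
  ext n
  rcases eq_or_ne n 0 with rfl | hn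
  · simp [E4, sigmaSeries]
  · simp [E4, sigmaSeries, coeff_one, hn, ArithmeticFunction.sigma_apply]

theorem E6_eq_sigmaSeries : E6 = 1 + (-504 : ℚ) • sigmaSeries 5 := by
  ext n
  rcases eq_or_ne n 0 with rfl | hn
  · simp [E6, sigmaSeries]
  · simp [E6, sigmaSeries, coeff_one, hn, ArithmeticFunction.sigma_apply]

theorem coeff_sigmaSeries_mul (r s n : ℕ) :
    coeff n (sigmaSeries r * sigmaSeries s) = ∑ t ∈ reps n, (t.1.1 : ℚ) ^ r * (t.2.1 : ℚ) ^ s := by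
  simp only [coeff_mul, coeff_sigmaSeries, sigma_eq_sum_divisorsAntidiagonal, sum_mul_sum,
    sum_reps]

theorem two_mul_coeff_sigmaSeries_mul (r s n : ℕ) {v : ℚ → ℚ → ℚ} (hv : ∀ a b, v a b = v b a)
    (hvp : ∀ a b, v a b - v (a + b) b = (a + b) ^ r * b ^ s + (a + b) ^ s * b ^ r) :
    2 * coeff n (sigmaSeries r * sigmaSeries s) = ∑ de ∈ n.divisorsAntidiagonal,
      (((de.2 : ℚ) - 1) * (2 * (de.1 : ℚ) ^ (r + s) + v de.1 de.1) + v 0 de.1 -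
        ∑ a ∈ range de.1, v a (de.1 - a)) := by
  have hswap : ∑ t ∈ reps n, (t.1.1 : ℚ) ^ r * (t.2.1 : ℚ) ^ s =
      ∑ t ∈ reps n, (t.1.1 : ℚ) ^ s * (t.2.1 : ℚ) ^ r := by
    rw [← sum_reps_swap]
    simp only [Prod.fst_swap, Prod.snd_swap, mul_comm]
  rw [coeff_sigmaSeries_mul, two_mul]
  nth_rewrite 2 [hswap]
  rw [← sum_add_distrib, sum_reps_eq_sum_divisorsAntidiagonal n (v := v)
    (p := fun a b => a ^ r * b ^ s + a ^ s * b ^ r) hv (fun _ _ => by ring) hvp]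
  refine sum_congr rfl fun de hde => ?_
  rw [sum_Ico_one_eq_sum_range_sub _
    (Nat.pos_of_mem_divisors (Nat.fst_mem_divisors_of_mem_antidiagonal hde)), Nat.cast_zero,
    sub_zero]
  ring

theorem sigmaSeries_one_mul_sigmaSeries_one :
    (12 : ℚ) • (sigmaSeries 1 * sigmaSeries 1) =
      (5 : ℚ) • sigmaSeries 3 + sigmaSeries 1 - (6 : ℚ) • qDeriv (sigmaSeries 1) := by
  ext n
  have h := two_mul_coeff_sigmaSeries_mul 1 1 n (v := fun a b => -(a ^ 2 + a * b + b ^ 2))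
    (fun _ _ => by ring) (fun _ _ => by ring)
  simp only [map_add, map_sub, coeff_smul, smul_eq_mul, coeff_qDeriv, coeff_sigmaSeries]
  rw [mul_sigma_eq_sum_divisorsAntidiagonal]
  simp only [sigma_eq_sum_divisorsAntidiagonal, mul_sum, ← sum_add_distrib, ← sum_sub_distrib]
  rw [show (12 : ℚ) = 6 * 2 by norm_num, mul_assoc, h, mul_sum]
  refine sum_congr rfl fun de _ => ?_
  ring_nf
  simp only [sum_sub_distrib, ← mul_sum, sum_const, card_range, nsmul_eq_mul, sum_range_natCast,
    sum_range_natCast_pow_two]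
  ring

theorem sigmaSeries_one_mul_sigmaSeries_three :
    (240 : ℚ) • (sigmaSeries 1 * sigmaSeries 3) =
      (21 : ℚ) • sigmaSeries 5 + (10 : ℚ) • sigmaSeries 3 - (30 : ℚ) • qDeriv (sigmaSeries 3) -
        sigmaSeries 1 := by
  ext n
  have h := two_mul_coeff_sigmaSeries_mul 1 3 n
    (v := fun a b => -(a ^ 4 + 2 * a ^ 3 * b + 3 * a ^ 2 * b ^ 2 + 2 * a * b ^ 3 + b ^ 4) / 4)
    (fun _ _ => by ring) (fun _ _ => by ring)
  simp only [map_add, map_sub, coeff_smul, smul_eq_mul, coeff_qDeriv, coeff_sigmaSeries]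
  rw [mul_sigma_eq_sum_divisorsAntidiagonal]
  simp only [sigma_eq_sum_divisorsAntidiagonal, mul_sum, ← sum_add_distrib, ← sum_sub_distrib]
  rw [show (240 : ℚ) = 120 * 2 by norm_num, mul_assoc, h, mul_sum]
  refine sum_congr rfl fun de _ => ?_
  ring_nf
  simp only [sum_add_distrib, ← mul_sum, ← sum_mul, sum_const, card_range,
    nsmul_eq_mul, sum_range_natCast, sum_range_natCast_pow_two, sum_range_natCast_pow_three,
    sum_range_natCast_pow_four]
  ring

theorem sigmaSeries_one_mul_sigmaSeries_five :
    (504 : ℚ) • (sigmaSeries 1 * sigmaSeries 5) =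
      (20 : ℚ) • sigmaSeries 7 + (21 : ℚ) • sigmaSeries 5 - (42 : ℚ) • qDeriv (sigmaSeries 5) +
        sigmaSeries 1 := by
  ext n
  have h := two_mul_coeff_sigmaSeries_mul 1 5 n
    (v := fun a b => -(2 * a ^ 6 + 6 * a ^ 5 * b + 5 * a ^ 4 * b ^ 2 + 5 * a ^ 2 * b ^ 4 +
      6 * a * b ^ 5 + 2 * b ^ 6) / 12)
    (fun _ _ => by ring) (fun _ _ => by ring)
  simp only [map_add, map_sub, coeff_smul, smul_eq_mul, coeff_qDeriv, coeff_sigmaSeries]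
  rw [mul_sigma_eq_sum_divisorsAntidiagonal]
  simp only [sigma_eq_sum_divisorsAntidiagonal, mul_sum, ← sum_add_distrib, ← sum_sub_distrib]
  rw [show (504 : ℚ) = 252 * 2 by norm_num, mul_assoc, h, mul_sum]
  refine sum_congr rfl fun de _ => ?_
  ring_nf
  simp only [sum_add_distrib, ← mul_sum, ← sum_mul, sum_const, card_range,
    nsmul_eq_mul, sum_range_natCast, sum_range_natCast_pow_two, sum_range_natCast_pow_four,
    sum_range_natCast_pow_five, sum_range_natCast_pow_six]
  ring

theorem sigmaSeries_three_mul_sigmaSeries_three :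
    (120 : ℚ) • (sigmaSeries 3 * sigmaSeries 3) = sigmaSeries 7 - sigmaSeries 3 := by
  ext n
  have h := two_mul_coeff_sigmaSeries_mul 3 3 n
    (v := fun a b => -(a ^ 4 * b ^ 2 + 2 * a ^ 3 * b ^ 3 + a ^ 2 * b ^ 4) / 2)
    (fun _ _ => by ring) (fun _ _ => by ring)
  simp only [map_sub, coeff_smul, smul_eq_mul, coeff_sigmaSeries, sigma_eq_sum_divisorsAntidiagonal,
    ← sum_sub_distrib]
  rw [show (120 : ℚ) = 60 * 2 by norm_num, mul_assoc, h, mul_sum]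
  refine sum_congr rfl fun de _ => ?_
  ring_nf
  simp only [sum_add_distrib, ← mul_sum, ← sum_mul, sum_range_natCast_pow_two,
    sum_range_natCast_pow_three, sum_range_natCast_pow_four]
  ring

end Ramanujan

/-- Ramanujan's differential system for `E₂, E₄, E₆`. -/
theorem ramanujan_differential_equations :
    qDeriv E2 = (1 / 12 : ℚ) • (E2 ^ 2 - E4) ∧
    qDeriv E4 = (1 / 3 : ℚ) • (E2 * E4 - E6) ∧
    qDeriv E6 = (1 / 2 : ℚ) • (E2 * E6 - E4 ^ 2) := by
  have h11 := Ramanujan.sigmaSeries_one_mul_sigmaSeries_one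
  have h13 := Ramanujan.sigmaSeries_one_mul_sigmaSeries_three
  have h15 := Ramanujan.sigmaSeries_one_mul_sigmaSeries_five
  have h33 := Ramanujan.sigmaSeries_three_mul_sigmaSeries_three
  simp only [Ramanujan.E2_eq_sigmaSeries, Ramanujan.E4_eq_sigmaSeries,
    Ramanujan.E6_eq_sigmaSeries, Ramanujan.qDeriv_one_add_smul]
  refine ⟨?_, ?_, ?_⟩
  · linear_combination (norm := algebra) (-4 : ℚ) • h11
  · linear_combination (norm := algebra) (8 : ℚ) • h13
  · linear_combination (norm := algebra) (-12 : ℚ) • h15 + (240 : ℚ) • h33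
end
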